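/- In the exploding change-point model (with g ≺ f_0 and f_m ≺ f_{m+1} in MLR order for all m, and continuous log-likelihood ratios x ↦ log(f_m(x)/g(x))), under the measure P_1 (so X_i has density f_{i-1} for all i), for every fixed n ≥ 1 and real c, the map k ↦ P_1( Σ_{i=k}^{k+n} log( f_{i-k}(X_i) / g(X_i) ) ≤ c ) is nonincreasing in k ≥ 1; in particular the supremum over k ≥ 1 is attained at k = 1. -/

import Mathlib

/-!
Each log-likelihood ratio `log (f m / g)` is nondecreasing: the MLR order is transitive along
`g ≺ f 0 ≺ f 1 ≺ ⋯`, and continuity rules out jumps to the junk value `log 0 = 0` off the common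
support. Hence `{x | ∑ j, log (f j (x j) / g (x j)) ≤ c}` is a lower set of `ℝⁿ⁺¹`. By
independence the block `(X κ, …, X (κ + n))` has the product law of the densities `f (κ + j)`;
passing from `κ` to `κ + 1` replaces each factor by the MLR-larger, hence stochastically larger,
`f (κ + j + 1)`, and exchanging the factors one at a time shows that the product law then puts
less mass on every lower set.
-/

open MeasureTheory ProbabilityTheory

def HasDensity {Ω : Type*} [MeasurableSpace Ω] (X : Ω → ℝ) (P : Measure Ω)
    (f : ℝ → ℝ) : Prop :=
  Measure.map X P = volume.withDensity (fun x => ENNReal.ofReal (f x))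

def LikelihoodRatioLE {α : Type*} [LE α] (p q : α → ℝ) : Prop :=
  ∀ x y, x ≤ y → p y * q x ≤ p x * q y

namespace LikelihoodRatioLE

variable {α : Type*}

theorem div_le_div [LE α] {p q : α → ℝ} (h : LikelihoodRatioLE p q) {x y : α} (hxy : x ≤ y)
    (hx : 0 < p x) (hy : 0 < p y) : q x / p x ≤ q y / p y := by
  rw [div_le_div_iff₀ hx hy]
  linarith [h x y hxy]

theorem trans [LinearOrder α] {p q r : α → ℝ} (hp : ∀ x, 0 ≤ p x) (hq : ∀ x, 0 ≤ q x)
    (hr : ∀ x, 0 ≤ r x) (hq_ne : q ≠ 0) (hpq : LikelihoodRatioLE p q) (hqr : LikelihoodRatioLE q r) :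
    LikelihoodRatioLE p r := by
  intro x y hxy
  rcases (hp y).eq_or_lt with hpy | hpy
  · rw [← hpy, zero_mul]; exact mul_nonneg (hp x) (hr y)
  rcases (hr x).eq_or_lt with hrx | hrx
  · rw [← hrx, mul_zero]; exact mul_nonneg (hp x) (hr y)
  -- A zero of `q` at `x` spreads to `[x, ∞)` through `r x > 0`, one at `y` to `(-∞, y]`
  -- through `p y > 0`; either way `q` would vanish everywhere.
  have above : q x = 0 → ∀ w, x ≤ w → q w = 0 := fun h0 w hw =>
    le_antisymm (nonpos_of_mul_nonpos_left (by simpa [h0] using hqr x w hw) hrx) (hq w)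
  have below : q y = 0 → ∀ w, w ≤ y → q w = 0 := fun h0 w hw =>
    le_antisymm (nonpos_of_mul_nonpos_right (by simpa [h0] using hpq w y hw) hpy) (hq w)
  have everywhere : q y = 0 → q = 0 := fun h0 => funext fun w =>
    (le_total w y).elim (below h0 w) fun hyw =>
      above (below h0 x hxy) w (hxy.trans hyw)
  have hqy : 0 < q y := (hq y).lt_of_ne fun h0 => hq_ne (everywhere h0.symm)
  have hqx : 0 < q x := (hq x).lt_of_ne fun h0 => hq_ne (everywhere (above h0.symm y hxy))
  have := mul_le_mul (hpq x y hxy) (hqr x y hxy) (mul_nonneg (hq y) (hr x))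
    (mul_nonneg (hp x) (hq y))
  nlinarith [mul_pos hqx hqy]

theorem of_chain [LinearOrder α] {p : α → ℝ} {f : ℕ → α → ℝ} (hp : ∀ x, 0 ≤ p x)
    (hf : ∀ m x, 0 ≤ f m x) (hf_ne : ∀ m, f m ≠ 0) (h₀ : LikelihoodRatioLE p (f 0))
    (hsucc : ∀ m, LikelihoodRatioLE (f m) (f (m + 1))) (m : ℕ) : LikelihoodRatioLE p (f m) := by
  induction m with
  | zero => exact h₀
  | succ m ih => exact ih.trans hp (hf m) (hf (m + 1)) (hf_ne m) (hsucc m)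

end LikelihoodRatioLE

section IntermediateValue

variable {α : Type*} [ConditionallyCompleteLinearOrder α] [TopologicalSpace α] [OrderTopology α]
  [DenselyOrdered α]

theorem Continuous.monotone_of_monotoneOn_support {ℓ : α → ℝ} (hℓ : Continuous ℓ)
    (hmono : MonotoneOn ℓ (Function.support ℓ)) : Monotone ℓ := by
  intro a b hab
  by_cases ha : ℓ a = 0 <;> by_cases hb : ℓ b = 0
  · rw [ha, hb]
  · -- If `ℓ b < 0`, then `ℓ b / 2` is a value `ℓ t` with `t ≤ b` and `ℓ t ≠ 0`.
    by_contra! hlt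
    obtain ⟨t, ⟨_, htb⟩, ht⟩ := intermediate_value_Icc' hab hℓ.continuousOn
      (show ℓ b / 2 ∈ Set.Icc (ℓ b) (ℓ a) by constructor <;> linarith)
    have := hmono (by simp [ht, hb]) hb htb
    linarith
  · by_contra! hlt
    obtain ⟨t, ⟨hat, _⟩, ht⟩ := intermediate_value_Icc' hab hℓ.continuousOn
      (show ℓ a / 2 ∈ Set.Icc (ℓ b) (ℓ a) by constructor <;> linarith)
    have := hmono ha (by simp [ht, ha]) hat
    linarith
  · exact hmono ha hb hab

theorem LikelihoodRatioLE.monotone_log_div {p q : α → ℝ} (h : LikelihoodRatioLE p q)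
    (hp : ∀ x, 0 ≤ p x) (hq : ∀ x, 0 ≤ q x) (hcont : Continuous fun x => Real.log (q x / p x)) :
    Monotone fun x => Real.log (q x / p x) := by
  refine hcont.monotone_of_monotoneOn_support fun x hx y hy hxy => ?_
  have pos_of_mem : ∀ {z}, z ∈ Function.support (fun x => Real.log (q x / p x)) →
      0 < p z ∧ 0 < q z := fun {z} hz => by
    obtain ⟨hne, -, -⟩ := Real.log_ne_zero.mp hz
    exact ⟨(hp z).lt_of_ne fun h0 => hne (by simp [← h0]),
      (hq z).lt_of_ne fun h0 => hne (by simp [← h0])⟩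
  obtain ⟨hpx, hqx⟩ := pos_of_mem hx
  exact Real.log_le_log (div_pos hqx hpx) (h.div_le_div hxy hpx (pos_of_mem hy).1)

end IntermediateValue

theorem isLowerSet_setOf_sum_le {ι α : Type*} [Fintype ι] [Preorder α] {ℓ : ι → α → ℝ}
    (hℓ : ∀ j, Monotone (ℓ j)) (c : ℝ) : IsLowerSet {x : ι → α | ∑ j, ℓ j (x j) ≤ c} :=
  fun _ _ hyx hx => (Finset.sum_le_sum fun j _ => hℓ j (hyx j)).trans hx

def StochasticallyLE {α : Type*} [LE α] [MeasurableSpace α] (μ ν : Measure α) : Prop :=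
  ∀ L, MeasurableSet L → IsLowerSet L → ν L ≤ μ L

namespace StochasticallyLE

variable {α : Type*} [MeasurableSpace α]

@[refl]
theorem refl [LE α] (μ : Measure α) : StochasticallyLE μ μ := fun _ _ _ => le_rfl

theorem trans [LE α] {μ ν ρ : Measure α} (h₁ : StochasticallyLE μ ν) (h₂ : StochasticallyLE ν ρ) :
    StochasticallyLE μ ρ := fun L hL hlow => (h₂ L hL hlow).trans (h₁ L hL hlow)

variable {ι : Type*} [Fintype ι] [Preorder α]

theorem pi_update [DecidableEq ι] {μ : ι → Measure α} [∀ i, SigmaFinite (μ i)] {i : ι} {ν : Measure α}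
    [SigmaFinite ν] (h : StochasticallyLE (μ i) ν) :
    StochasticallyLE (Measure.pi μ) (Measure.pi (Function.update μ i ν)) := by
  have : ∀ j, SigmaFinite (Function.update μ i ν j) := fun j => by
    rcases eq_or_ne j i with rfl | hj
    · rwa [Function.update_self]
    · rw [Function.update_of_ne hj]; infer_instance
  intro E hE hlow
  rcases isEmpty_or_nonempty (ι → α) with _ | ⟨⟨x₀⟩⟩
  · simp [Set.eq_empty_of_isEmpty E]
  -- Integrate out coordinate `i` first; the remaining coordinates carry the same measures.
  have h_marg : ∀ ρ : ι → Measure α, (∀ j, SigmaFinite (ρ j)) → Measure.pi ρ E =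
      (∫⋯∫⁻_Finset.univ.erase i, (fun x => ρ i (Function.update x i ⁻¹' E)) ∂ρ) x₀ :=
    fun ρ _ => by
      rw [← lintegral_indicator_one hE, lintegral_eq_lmarginal_univ x₀,
        lmarginal_erase' _ (measurable_one.indicator hE) (Finset.mem_univ i)]
      congr 1; funext x
      rw [← lintegral_indicator_one (measurable_update x hE)]
      rfl
  have h_rest : (Measure.pi fun j : (Finset.univ.erase i : Finset ι) => Function.update μ i ν j) =
      Measure.pi fun j : (Finset.univ.erase i : Finset ι) => μ j := by
    congr 1; funext j; exact Function.update_of_ne (Finset.ne_of_mem_erase j.2) _ _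
  rw [h_marg μ inferInstance, h_marg _ this, lmarginal, lmarginal, h_rest, Function.update_self]
  refine lintegral_mono fun y => h _ (measurable_update _ hE) ?_
  exact hlow.preimage Function.update_mono

theorem pi {μ ν : ι → Measure α} [∀ i, SigmaFinite (μ i)] [∀ i, SigmaFinite (ν i)]
    (h : ∀ i, StochasticallyLE (μ i) (ν i)) :
    StochasticallyLE (Measure.pi μ) (Measure.pi ν) := by
  classical
  suffices ∀ s : Finset ι, StochasticallyLE (Measure.pi μ) (Measure.pi (s.piecewise ν μ)) by
    simpa using this Finset.univ
  intro s
  induction s using Finset.induction_on with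
  | empty => simp only [Finset.piecewise_empty]; rfl
  | insert j s hj ih =>
    have : ∀ k, SigmaFinite (s.piecewise ν μ k) := fun k => by
      unfold Finset.piecewise; split_ifs <;> infer_instance
    rw [Finset.piecewise_insert]
    exact ih.trans (pi_update (by rw [Finset.piecewise_eq_of_notMem _ _ _ hj]; exact h j))

end StochasticallyLE

theorem LikelihoodRatioLE.stochasticallyLE_withDensity {α : Type*} [LinearOrder α]
    [MeasurableSpace α] {μ : Measure α} {p q : α → ℝ} (h : LikelihoodRatioLE p q)
    (hp_meas : Measurable p) (hq_meas : Measurable q) (hp : ∀ x, 0 ≤ p x)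
    (hp_one : ∫⁻ x, ENNReal.ofReal (p x) ∂μ = 1) (hq_one : ∫⁻ x, ENNReal.ofReal (q x) ∂μ = 1) :
    StochasticallyLE (μ.withDensity fun x => ENNReal.ofReal (p x))
      (μ.withDensity fun x => ENNReal.ofReal (q x)) := by
  intro L hL hlow
  set p' := fun x => ENNReal.ofReal (p x)
  set q' := fun x => ENNReal.ofReal (q x)
  have hp' : Measurable p' := hp_meas.ennreal_ofReal
  have hq' : Measurable q' := hq_meas.ennreal_ofReal
  rw [withDensity_apply _ hL, withDensity_apply _ hL]
  set A := ∫⁻ x in L, p' x ∂μ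
  set B := ∫⁻ x in L, q' x ∂μ
  have hA : A + ∫⁻ x in Lᶜ, p' x ∂μ = 1 := (lintegral_add_compl p' hL).trans hp_one
  have hB : B + ∫⁻ x in Lᶜ, q' x ∂μ = 1 := (lintegral_add_compl q' hL).trans hq_one
  -- Every point of `L` lies below every point of `Lᶜ`, where the likelihood ratio is larger.
  have cross : (∫⁻ y in Lᶜ, p' y ∂μ) * B ≤ (∫⁻ y in Lᶜ, q' y ∂μ) * A := by
    rw [← lintegral_mul_const _ hp', ← lintegral_mul_const _ hq']
    refine setLIntegral_mono (hq'.mul_const A) fun y hy => ?_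
    rw [← lintegral_const_mul _ hq', ← lintegral_const_mul _ hp']
    refine setLIntegral_mono (measurable_const.mul hp') fun x hx => ?_
    have hxy : x ≤ y := le_of_not_ge fun hyx => hy (hlow hyx hx)
    simp only [p', q']
    rw [mul_comm (ENNReal.ofReal (q y)), ← ENNReal.ofReal_mul (hp y), ← ENNReal.ofReal_mul (hp x)]
    exact ENNReal.ofReal_le_ofReal (h x y hxy)
  calc B = B * (A + ∫⁻ x in Lᶜ, p' x ∂μ) := by rw [hA, mul_one]
    _ ≤ B * A + (∫⁻ y in Lᶜ, q' y ∂μ) * A := by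
        rw [mul_add, mul_comm B (∫⁻ x in Lᶜ, p' x ∂μ)]; exact add_le_add le_rfl cross
    _ = A := by rw [← add_mul, hB, one_mul]

theorem lintegral_ofReal_eq_one {α : Type*} [MeasurableSpace α] {μ : Measure α} {f : α → ℝ}
    (hf : ∀ x, 0 ≤ f x) (h : ∫ x, f x ∂μ = 1) : ∫⁻ x, ENNReal.ofReal (f x) ∂μ = 1 := by
  rw [← ofReal_integral_eq_lintegral_ofReal (.of_integral_ne_zero (by simp [h])) (.of_forall hf),
    h, ENNReal.ofReal_one]

theorem ProbabilityTheory.iIndepFun.map_comp_eq_pi_withDensity {Ω ι κ : Type*}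
    [MeasurableSpace Ω] [Fintype ι] {P : Measure Ω} {X : κ → Ω → ℝ} {f : κ → ℝ → ℝ}
    (hX : ∀ i, Measurable (X i)) (hindep : iIndepFun X P) (hdens : ∀ i, HasDensity (X i) P (f i))
    {e : ι → κ} (he : e.Injective) :
    P.map (fun ω j => X (e j) ω) =
      Measure.pi fun j => volume.withDensity fun x => ENNReal.ofReal (f (e j) x) := by
  rw [(hindep.precomp he).map_fun_eq_pi_map fun j => (hX _).aemeasurable]
  exact congrArg Measure.pi (funext fun j => hdens (e j))

-- `X j` is the observation at time `j + 1`, so `κ = k - 1` in the notation of the paper.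
theorem prob_sum_llr_le_antitone_in_changepoint_general
    {Ω : Type*} [MeasurableSpace Ω] (P : Measure Ω)
    (X : ℕ → Ω → ℝ) (f : ℕ → ℝ → ℝ) (g : ℝ → ℝ)
    (hX_meas : ∀ j, Measurable (X j))
    (hf_meas : ∀ m, Measurable (f m))
    (hf_nonneg : ∀ m x, 0 ≤ f m x) (hg_nonneg : ∀ x, 0 ≤ g x)
    (hf_int : ∀ m, ∫ x, f m x = 1)
    (hMLR0 : ∀ x y : ℝ, x ≤ y → g y * f 0 x ≤ g x * f 0 y)
    (hMLR : ∀ (m : ℕ) (x y : ℝ), x ≤ y → f m y * f (m + 1) x ≤ f m x * f (m + 1) y)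
    (hcont : ∀ m : ℕ, Continuous fun x => Real.log (f m x / g x))
    (hindep : iIndepFun X P)
    (hdens : ∀ j : ℕ, HasDensity (X j) P (f j)) :
    ∀ (n : ℕ), 1 ≤ n → ∀ (c : ℝ),
      (Antitone fun κ : ℕ =>
        P {ω | ∑ j ∈ Finset.range (n + 1),
            Real.log (f j (X (κ + j) ω) / g (X (κ + j) ω)) ≤ c})
      ∧
      (⨆ κ : ℕ,
          P {ω | ∑ j ∈ Finset.range (n + 1),
              Real.log (f j (X (κ + j) ω) / g (X (κ + j) ω)) ≤ c})
        = P {ω | ∑ j ∈ Finset.range (n + 1),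
            Real.log (f j (X j ω) / g (X j ω)) ≤ c} := by
  intro n _ c
  have hg_f := LikelihoodRatioLE.of_chain hg_nonneg hf_nonneg
    (fun m h0 => by simpa [h0] using hf_int m) hMLR0 hMLR
  set E : Set (Fin (n + 1) → ℝ) := {x | ∑ j : Fin (n + 1), Real.log (f j (x j) / g (x j)) ≤ c}
  have hE : MeasurableSet E := measurableSet_le (Finset.measurable_sum _ fun j _ =>
    (hcont j).measurable.comp (measurable_pi_apply j)) measurable_const
  have hE_lower : IsLowerSet E := isLowerSet_setOf_sum_le
    (fun j : Fin (n + 1) => (hg_f j).monotone_log_div hg_nonneg (hf_nonneg j) (hcont j)) c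
  have h_block : ∀ κ, P {ω | ∑ j ∈ Finset.range (n + 1),
        Real.log (f j (X (κ + j) ω) / g (X (κ + j) ω)) ≤ c} =
      Measure.pi (fun j : Fin (n + 1) => volume.withDensity fun x =>
        ENNReal.ofReal (f (κ + j) x)) E := fun κ => by
    rw [← hindep.map_comp_eq_pi_withDensity hX_meas hdens (e := fun j : Fin (n + 1) => κ + j)
      ((add_right_injective κ).comp Fin.val_injective), Measure.map_apply (by fun_prop) hE]
    congr with ω
    rw [← Fin.sum_univ_eq_sum_range (fun j => Real.log (f j (X (κ + j) ω) / g (X (κ + j) ω)))]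
    rfl
  have hanti : Antitone fun κ : ℕ => P {ω | ∑ j ∈ Finset.range (n + 1),
      Real.log (f j (X (κ + j) ω) / g (X (κ + j) ω)) ≤ c} := by
    refine antitone_nat_of_succ_le fun κ => ?_
    rw [h_block, h_block]
    refine StochasticallyLE.pi (fun j => ?_) E hE hE_lower
    rw [Nat.add_right_comm]
    exact LikelihoodRatioLE.stochasticallyLE_withDensity (hMLR _) (hf_meas _) (hf_meas _)
      (hf_nonneg _) (lintegral_ofReal_eq_one (hf_nonneg _) (hf_int _))
      (lintegral_ofReal_eq_one (hf_nonneg _) (hf_int _))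
  refine ⟨hanti, (iSup_le fun κ => (hanti κ.zero_le).trans_eq ?_).antisymm (le_iSup_of_le 0 ?_)⟩ <;>
    simp only [zero_add, le_rfl]

/-- In the exploding change-point model (`g ≺ f 0 ≺ f 1 ≺ ...` in MLR order,
continuous log-likelihood ratios), under `P_1` (here `X j`, the observation at time
`j + 1`, has density `f j`, and the observations are independent), the map
`k ↦ P_1(Σ_{i=k}^{k+n} log(f_{i-k}(X_i)/g(X_i)) ≤ c)` is nonincreasing in `k ≥ 1`
(below `κ = k - 1`), and in particular its supremum over `k ≥ 1` is attained at
`k = 1` (i.e. `κ = 0`). -/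
theorem prob_sum_llr_le_antitone_in_changepoint
    {Ω : Type*} [MeasurableSpace Ω] (P : Measure Ω) [IsProbabilityMeasure P]
    (X : ℕ → Ω → ℝ) (f : ℕ → ℝ → ℝ) (g : ℝ → ℝ)
    (hX_meas : ∀ j, Measurable (X j))
    (hf_meas : ∀ m, Measurable (f m)) (hg_meas : Measurable g)
    (hf_nonneg : ∀ m x, 0 ≤ f m x) (hg_nonneg : ∀ x, 0 ≤ g x)
    (hf_int : ∀ m, ∫ x, f m x = 1) (hg_int : ∫ x, g x = 1)
    (hMLR0 : ∀ x y : ℝ, x ≤ y → g y * f 0 x ≤ g x * f 0 y)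
    (hMLR : ∀ (m : ℕ) (x y : ℝ), x ≤ y → f m y * f (m + 1) x ≤ f m x * f (m + 1) y)
    (hcont : ∀ m : ℕ, Continuous fun x => Real.log (f m x / g x))
    (hindep : iIndepFun X P)
    (hdens : ∀ j : ℕ, HasDensity (X j) P (f j)) :
    ∀ (n : ℕ), 1 ≤ n → ∀ (c : ℝ),
      (Antitone fun κ : ℕ =>
        P {ω | ∑ j ∈ Finset.range (n + 1),
            Real.log (f j (X (κ + j) ω) / g (X (κ + j) ω)) ≤ c})
      ∧
      (⨆ κ : ℕ,
          P {ω | ∑ j ∈ Finset.range (n + 1),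
              Real.log (f j (X (κ + j) ω) / g (X (κ + j) ω)) ≤ c})
        = P {ω | ∑ j ∈ Finset.range (n + 1),
            Real.log (f j (X j ω) / g (X j ω)) ≤ c} :=
  prob_sum_llr_le_antitone_in_changepoint_general P X f g hX_meas hf_meas hf_nonneg hg_nonneg hf_int
    hMLR0 hMLR hcont hindep hdens
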